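/- arXiv:2412.18841 — 5 statements merged into one kernel-verified Lean document; each statement's English description precedes it below -/
import Mathlib

section
/- For every nonnegative integer n and commuting variables x, y in a commutative ring containing the rationals, (x+y)^n / (n+1) equals the sum over all triples (i,j,k) of natural numbers with 2i+j+k = n of (n choose i,i,j,k) * (i+j)! (i+k)! / (n+1)! * x^{i+j} y^{i+k}, where (n choose i,i,j,k) = n!/(i! i! j! k!). -/
set_option linter.unnecessarySeqFocus false
open Finset

lemma vandermonde' (n m : ℕ) (hm : m ≤ n) :
    ∑ i ∈ range (n+1), m.choose i * (n - m).choose i = n.choose m := by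
  have h := Nat.add_choose_eq m (n - m) m
  rw [Nat.add_sub_cancel' hm] at h
  rw [h, Finset.Nat.sum_antidiagonal_eq_sum_range_succ (fun a b => m.choose a * (n-m).choose b)]
  have h1 : ∑ i ∈ range (n+1), m.choose i * (n - m).choose i
      = ∑ i ∈ range (m+1), m.choose i * (n - m).choose i := by
    symm
    apply Finset.sum_subset
    · intro i hi; simp at hi ⊢; omega
    · intro i _ hi; simp only [mem_range, not_lt] at hi
      rw [Nat.choose_eq_zero_of_lt (by omega)]; ring
  rw [h1, ← Finset.sum_range_reflect]
  apply Finset.sum_congr rfl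
  intro i hi
  simp only [mem_range] at hi
  rw [show m + 1 - 1 - i = m - i by omega, Nat.choose_symm (by omega : i ≤ m)]

theorem stmt_3 (R : Type*) [CommRing R] [Algebra ℚ R] (n : ℕ) (x y : R) :
    ((n + 1 : ℚ))⁻¹ • (x + y) ^ n =
      ∑ p ∈ (Finset.range (n + 1) ×ˢ Finset.range (n + 1) ×ˢ Finset.range (n + 1)).filter
          (fun p => 2 * p.1 + p.2.1 + p.2.2 = n),
        ((n.factorial : ℚ) / (p.1.factorial * p.1.factorial * p.2.1.factorial * p.2.2.factorial)
            * (p.1 + p.2.1).factorial * (p.1 + p.2.2).factorial / (n + 1).factorial) •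
          (x ^ (p.1 + p.2.1) * y ^ (p.1 + p.2.2)) := by
  -- Step 1: reindex RHS via (i,j,k) ↦ (m,i) = (i+j, i)
  have step1 : (∑ p ∈ (Finset.range (n + 1) ×ˢ Finset.range (n + 1) ×ˢ Finset.range (n + 1)).filter
          (fun p => 2 * p.1 + p.2.1 + p.2.2 = n),
        ((n.factorial : ℚ) / (p.1.factorial * p.1.factorial * p.2.1.factorial * p.2.2.factorial)
            * (p.1 + p.2.1).factorial * (p.1 + p.2.2).factorial / (n + 1).factorial) •
          (x ^ (p.1 + p.2.1) * y ^ (p.1 + p.2.2)))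
      = ∑ q ∈ (Finset.range (n+1) ×ˢ Finset.range (n+1)).filter
          (fun q => q.2 ≤ q.1 ∧ q.1 + q.2 ≤ n),
        (((q.1.choose q.2 * (n - q.1).choose q.2 : ℕ) : ℚ) / (n + 1)) •
          (x ^ q.1 * y ^ (n - q.1)) := by
    apply Finset.sum_nbij' (i := fun p => (p.1 + p.2.1, p.1))
      (j := fun q => (q.2, q.1 - q.2, n - q.1 - q.2))
    · intro p hp
      simp only [mem_filter, mem_product, mem_range] at hp ⊢
      omega
    · intro q hq
      simp only [mem_filter, mem_product, mem_range] at hq ⊢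
      omega
    · intro p hp
      simp only [mem_filter, mem_product, mem_range] at hp
      ext <;> simp <;> omega
    · intro q hq
      simp only [mem_filter, mem_product, mem_range] at hq
      ext <;> simp <;> omega
    · intro p hp
      simp only [mem_filter, mem_product, mem_range] at hp
      obtain ⟨⟨hi, hj, hk⟩, hsum⟩ := hp
      obtain ⟨i, j, k⟩ := p
      simp only at *
      have h1 : i + k = n - (i + j) := by omega
      congr 1
      · rw [Nat.cast_mul, Nat.cast_choose ℚ (by omega : i ≤ i + j),
          Nat.cast_choose ℚ (by omega : i ≤ n - (i + j)), ← h1]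
        rw [show i + j - i = j by omega, show i + k - i = k by omega]
        have hfn : ((n+1).factorial : ℚ) = (n+1) * n.factorial := by
          rw [Nat.factorial_succ]; push_cast; ring
        rw [hfn]
        have := n.factorial_pos
        have := i.factorial_pos
        have := j.factorial_pos
        have := k.factorial_pos
        field_simp
      · rw [← h1]
  rw [step1]
  -- Step 2: extend the filtered pair sum to the full product (extra terms vanish)
  have step2 : (∑ q ∈ (Finset.range (n+1) ×ˢ Finset.range (n+1)).filter
          (fun q => q.2 ≤ q.1 ∧ q.1 + q.2 ≤ n),
        (((q.1.choose q.2 * (n - q.1).choose q.2 : ℕ) : ℚ) / (n + 1)) •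
          (x ^ q.1 * y ^ (n - q.1)))
      = ∑ q ∈ Finset.range (n+1) ×ˢ Finset.range (n+1),
        (((q.1.choose q.2 * (n - q.1).choose q.2 : ℕ) : ℚ) / (n + 1)) •
          (x ^ q.1 * y ^ (n - q.1)) := by
    apply Finset.sum_subset (Finset.filter_subset _ _)
    intro q hq hq'
    simp only [mem_product, mem_range] at hq
    by_cases hc : q.2 ≤ q.1 ∧ q.1 + q.2 ≤ n
    · exact absurd (Finset.mem_filter.mpr
        ⟨Finset.mem_product.mpr ⟨mem_range.mpr hq.1, mem_range.mpr hq.2⟩, hc⟩) hq'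
    · have : q.1.choose q.2 * (n - q.1).choose q.2 = 0 := by
        rcases not_and_or.mp hc with h | h
        · rw [Nat.choose_eq_zero_of_lt (show q.1 < q.2 by omega)]; ring
        · rw [Nat.choose_eq_zero_of_lt (show n - q.1 < q.2 by omega)]; ring
      rw [this]
      simp
  rw [step2, Finset.sum_product]
  -- Step 3: sum over i and apply Vandermonde
  rw [add_pow, Finset.smul_sum]
  apply Finset.sum_congr rfl
  intro m hm
  simp only [mem_range] at hm
  dsimp only
  rw [← Finset.sum_smul]
  have hv : ∑ i ∈ range (n+1), (((m.choose i * (n - m).choose i : ℕ) : ℚ) / (n + 1))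
      = ((n.choose m : ℕ) : ℚ) / (n + 1) := by
    rw [← Finset.sum_div, ← Nat.cast_sum, vandermonde' n m (by omega)]
  rw [hv]
  have : x ^ m * y ^ (n - m) * (n.choose m : R)
      = ((n.choose m : ℕ) : ℚ) • (x ^ m * y ^ (n - m)) := by
    rw [Nat.cast_smul_eq_nsmul, nsmul_eq_mul]; ring
  rw [this, smul_smul]
  congr 1
  field_simp
end

section
/- Equivalently in binomial form: for every nonnegative integer n and elements x, y of a commutative ring, (x+y)^n equals the sum over triples (i,j,k) ∈ ℕ³ with 2i+j+k = n of binom(i+j, i) * binom(i+k, k) * x^{i+j} * y^{i+k}. -/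
lemma vand (a n : ℕ) (h : a ≤ n) :
    ∑ i ∈ Finset.range (n + 1), a.choose i * (n - a).choose i = n.choose a := by
  have h1 : ∑ i ∈ Finset.range (n + 1), a.choose i * (n - a).choose i
      = ∑ i ∈ Finset.range (n - a + 1), a.choose i * (n - a).choose i := by
    refine (Finset.sum_subset (Finset.range_subset_range.mpr (by omega)) ?_).symm
    intro i hi hni
    simp only [Finset.mem_range] at hi hni
    rw [Nat.choose_eq_zero_of_lt (show n - a < i by omega), mul_zero]
  rw [h1]
  have h2 : ∀ i ∈ Finset.range (n - a + 1),
      a.choose i * (n - a).choose i = a.choose i * (n - a).choose (n - a - i) := by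
    intro i hi
    simp only [Finset.mem_range] at hi
    rw [Nat.choose_symm (by omega)]
  rw [Finset.sum_congr rfl h2]
  have h3 := Nat.add_choose_eq a (n - a) (n - a)
  rw [Finset.Nat.sum_antidiagonal_eq_sum_range_succ_mk] at h3
  rw [← h3, Nat.add_sub_cancel' h, Nat.choose_symm h]

theorem stmt_4 (R : Type*) [CommRing R] (n : ℕ) (x y : R) :
    (x + y) ^ n =
      ∑ p ∈ (Finset.range (n + 1) ×ˢ Finset.range (n + 1) ×ˢ Finset.range (n + 1)).filter
          (fun p => 2 * p.1 + p.2.1 + p.2.2 = n),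
        ((p.1 + p.2.1).choose p.1 * (p.1 + p.2.2).choose p.2.2 : R) *
          x ^ (p.1 + p.2.1) * y ^ (p.1 + p.2.2) := by
  have key : ∑ p ∈ (Finset.range (n + 1) ×ˢ Finset.range (n + 1) ×ˢ Finset.range (n + 1)).filter
          (fun p => 2 * p.1 + p.2.1 + p.2.2 = n),
        ((p.1 + p.2.1).choose p.1 * (p.1 + p.2.2).choose p.2.2 : R) *
          x ^ (p.1 + p.2.1) * y ^ (p.1 + p.2.2)
      = ∑ q ∈ (Finset.range (n + 1) ×ˢ Finset.range (n + 1)).filter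
          (fun q => q.2 ≤ q.1 ∧ q.1 + q.2 ≤ n),
        ((q.1.choose q.2 * (n - q.1).choose q.2 : ℕ) : R) * x ^ q.1 * y ^ (n - q.1) := by
    refine Finset.sum_nbij' (i := fun p => (p.1 + p.2.1, p.1))
      (j := fun q => (q.2, q.1 - q.2, n - q.1 - q.2)) ?_ ?_ ?_ ?_ ?_
    · intro p hp
      simp only [Finset.mem_filter, Finset.mem_product, Finset.mem_range] at hp ⊢
      omega
    · intro q hq
      simp only [Finset.mem_filter, Finset.mem_product, Finset.mem_range] at hq ⊢
      omega
    · intro p hp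
      simp only [Finset.mem_filter, Finset.mem_product, Finset.mem_range] at hp
      ext <;> simp <;> omega
    · intro q hq
      simp only [Finset.mem_filter, Finset.mem_product, Finset.mem_range] at hq
      ext <;> simp <;> omega
    · intro p hp
      simp only [Finset.mem_filter, Finset.mem_product, Finset.mem_range] at hp
      obtain ⟨i, j, k⟩ := p
      simp only at hp ⊢
      have hk : i + k = n - (i + j) := by omega
      have hc : (i + k).choose k = (n - (i + j)).choose i := by
        rw [← hk, add_comm i k, Nat.choose_symm_add]
      rw [hc, hk]
      push_cast
      ring
  rw [key, Finset.sum_filter, Finset.sum_product, add_pow]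
  refine Finset.sum_congr rfl ?_
  intro a ha
  simp only [Finset.mem_range] at ha
  have hinner : ∀ i ∈ Finset.range (n + 1),
      (if i ≤ a ∧ a + i ≤ n then ((a.choose i * (n - a).choose i : ℕ) : R) * x ^ a * y ^ (n - a) else 0)
      = ((a.choose i * (n - a).choose i : ℕ) : R) * x ^ a * y ^ (n - a) := by
    intro i hi
    simp only [Finset.mem_range] at hi
    split_ifs with h
    · rfl
    · rcases not_and_or.mp h with h' | h'
      · have hz : a.choose i = 0 := Nat.choose_eq_zero_of_lt (by omega)
        simp [hz]
      · have hz : (n - a).choose i = 0 := Nat.choose_eq_zero_of_lt (by omega)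
        simp [hz]
  rw [Finset.sum_congr rfl hinner, ← Finset.sum_mul, ← Finset.sum_mul, ← Nat.cast_sum,
    vand a n (by omega)]
  ring
end

section
/- Let S = F₂[x, y] be the polynomial ring over the field with two elements, with the symmetric group on two elements acting by swapping x and y. There is no additive, G-equivariant map π : S → S^G with π(f) = f for all f ∈ S^G; that is, the inclusion S^G ↪ S admits no G-equivariant splitting. -/
theorem stmt_10 :
    ¬ ∃ π : MvPolynomial (Fin 2) (ZMod 2) → MvPolynomial (Fin 2) (ZMod 2),
      (∀ f g, π (f + g) = π f + π g) ∧
      (∀ f, MvPolynomial.rename (Equiv.swap (0 : Fin 2) 1) (π f) = π f) ∧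
      (∀ f, MvPolynomial.rename (Equiv.swap (0 : Fin 2) 1) f = f → π f = f) ∧
      (∀ f, π (MvPolynomial.rename (Equiv.swap (0 : Fin 2) 1) f) = π f) := by
  rintro ⟨π, hadd, _, hid, hequiv⟩
  have hxy : MvPolynomial.rename (Equiv.swap (0 : Fin 2) 1)
      (MvPolynomial.X 0 + MvPolynomial.X 1 : MvPolynomial (Fin 2) (ZMod 2))
      = MvPolynomial.X 0 + MvPolynomial.X 1 := by
    simp [map_add, MvPolynomial.rename_X, add_comm]
  have h1 : π (MvPolynomial.X 0 + MvPolynomial.X 1) = MvPolynomial.X 0 + MvPolynomial.X 1 :=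
    hid _ hxy
  have h2 : π (MvPolynomial.X 1 : MvPolynomial (Fin 2) (ZMod 2)) = π (MvPolynomial.X 0) := by
    have := hequiv (MvPolynomial.X 0 : MvPolynomial (Fin 2) (ZMod 2))
    simpa [MvPolynomial.rename_X] using this
  have h3 : (MvPolynomial.X 0 + MvPolynomial.X 1 : MvPolynomial (Fin 2) (ZMod 2)) = 0 := by
    rw [← h1, hadd, h2]
    exact CharTwo.add_self_eq_zero _
  have := congrArg (MvPolynomial.eval (fun i : Fin 2 => if i = 0 then (1 : ZMod 2) else 0)) h3
  simp at this
end

section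
/- Let S = F₃[x, y, z] with the alternating group A₃ acting by cyclically permuting the variables, let e₁, e₂, e₃ be the elementary symmetric polynomials and Δ = (x−y)(y−z)(z−x). Then Δ is A₃-invariant, Δ ∈ (e₁, e₂, e₃)S, but Δ ∉ (e₁, e₂, e₃)S^{A₃}. -/
open MvPolynomial in
theorem stmt_12 :
    let S := MvPolynomial (Fin 3) (ZMod 3)
    let σ : S →ₐ[ZMod 3] S := rename (finRotate 3)
    let e₁ : S := X 0 + X 1 + X 2
    let e₂ : S := X 0 * X 1 + X 1 * X 2 + X 2 * X 0
    let e₃ : S := X 0 * X 1 * X 2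
    let Δ : S := (X 0 - X 1) * (X 1 - X 2) * (X 2 - X 0)
    σ Δ = Δ ∧
    Δ ∈ Ideal.span ({e₁, e₂, e₃} : Set S) ∧
    ¬ ∃ g₁ g₂ g₃ : S, σ g₁ = g₁ ∧ σ g₂ = g₂ ∧ σ g₃ = g₃ ∧
        Δ = g₁ * e₁ + g₂ * e₂ + g₃ * e₃ := by
  intro S σ e₁ e₂ e₃ Δ
  have r0 : finRotate 3 0 = 1 := by decide
  have r1 : finRotate 3 1 = 2 := by decide
  have r2 : finRotate 3 2 = 0 := by decide
  have h3 : (3 : MvPolynomial (Fin 3) (ZMod 3)) = 0 := by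
    have h : ((3 : ℕ) : MvPolynomial (Fin 3) (ZMod 3)) = C ((3 : ℕ) : ZMod 3) :=
      (C_eq_coe_nat 3).symm
    rw [show ((3 : ℕ) : ZMod 3) = 0 from rfl, map_zero] at h
    simpa using h
  refine ⟨?_, ?_, ?_⟩
  · show (rename (finRotate 3)) ((X 0 - X 1) * (X 1 - X 2) * (X 2 - X 0))
      = ((X 0 - X 1) * (X 1 - X 2) * (X 2 - X 0) : MvPolynomial (Fin 3) (ZMod 3))
    simp only [map_mul, map_sub, rename_X, r0, r1, r2]
    ring
  · have key : Δ = (2 * X 0 * X 2 + X 1 * X 2) * e₁ + (X 1 - X 0) * e₂ := by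
      show ((X 0 - X 1) * (X 1 - X 2) * (X 2 - X 0) : MvPolynomial (Fin 3) (ZMod 3))
        = (2 * X 0 * X 2 + X 1 * X 2) * (X 0 + X 1 + X 2)
          + (X 1 - X 0) * (X 0 * X 1 + X 1 * X 2 + X 2 * X 0)
      linear_combination (-(X 0 * (X 2 : MvPolynomial (Fin 3) (ZMod 3)) ^ 2
        + X 1 ^ 2 * X 2 + X 0 * X 1 * X 2)) * h3
    rw [key]
    exact Ideal.add_mem _
      (Ideal.mul_mem_left _ _ (Ideal.subset_span (by simp)))
      (Ideal.mul_mem_left _ _ (Ideal.subset_span (by simp)))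
  · rintro ⟨g₁', g₂', g₃', hg₁', hg₂', hg₃', heq'⟩
    obtain ⟨g₁, g₂, g₃, hg₁, heq⟩ :
        ∃ g₁ g₂ g₃ : MvPolynomial (Fin 3) (ZMod 3),
          rename (⇑(finRotate 3)) g₁ = g₁ ∧
          (X 0 - X 1) * (X 1 - X 2) * (X 2 - X 0)
            = g₁ * (X 0 + X 1 + X 2) + g₂ * (X 0 * X 1 + X 1 * X 2 + X 2 * X 0)
              + g₃ * (X 0 * X 1 * X 2) :=
      ⟨g₁', g₂', g₃', hg₁', heq'⟩
    have heq' : (X 0 ^ 2 * X 2 + X 1 ^ 2 * X 0 + X 2 ^ 2 * X 1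
          - X 0 ^ 2 * X 1 - X 1 ^ 2 * X 2 - X 2 ^ 2 * X 0 : MvPolynomial (Fin 3) (ZMod 3))
        = (g₁ * X 0 + g₁ * X 1 + g₁ * X 2
          + (g₂ * X 0 * X 1 + g₂ * X 1 * X 2 + g₂ * X 2 * X 0)
          + g₃ * X 0 * X 1 * X 2 : MvPolynomial (Fin 3) (ZMod 3)) := by
      linear_combination heq
    have inv : ∀ d : Fin 3 →₀ ℕ,
        coeff (Finsupp.mapDomain (⇑(finRotate 3)) d) g₁ = coeff d g₁ := by
      intro d
      conv_lhs => rw [← hg₁]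
      exact coeff_rename_mapDomain _ (Equiv.injective _) g₁ d
    have m1 : Finsupp.mapDomain (⇑(finRotate 3))
        (Finsupp.single (0 : Fin 3) 1 + Finsupp.single 1 1)
        = Finsupp.single 1 1 + Finsupp.single 2 1 := by
      rw [Finsupp.mapDomain_add, Finsupp.mapDomain_single, Finsupp.mapDomain_single, r0, r1]
    have m2 : Finsupp.mapDomain (⇑(finRotate 3))
        (Finsupp.single (1 : Fin 3) 1 + Finsupp.single 2 1)
        = Finsupp.single 2 1 + Finsupp.single 0 1 := by
      rw [Finsupp.mapDomain_add, Finsupp.mapDomain_single, Finsupp.mapDomain_single, r1, r2]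
    have arel : coeff (Finsupp.single (0 : Fin 3) 1 + Finsupp.single 1 1) g₁
        = coeff (Finsupp.single (0 : Fin 3) 1 + Finsupp.single 2 1) g₁ := by
      have t1 := inv (Finsupp.single (0 : Fin 3) 1 + Finsupp.single 1 1)
      have t2 := inv (Finsupp.single (1 : Fin 3) 1 + Finsupp.single 2 1)
      rw [m1] at t1
      rw [m2] at t2
      rw [← t1, ← t2, add_comm]
    have s1 : (Finsupp.single (0 : Fin 3) 2 + Finsupp.single 1 1) - Finsupp.single 0 1
        = Finsupp.single (0 : Fin 3) 1 + Finsupp.single 1 1 := by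
      ext i; fin_cases i <;> simp
    have s2 : (Finsupp.single (0 : Fin 3) 2 + Finsupp.single 1 1) - Finsupp.single 1 1
        = Finsupp.single (0 : Fin 3) 2 := by
      ext i; fin_cases i <;> simp
    have s3 : (Finsupp.single (0 : Fin 3) 2 : Fin 3 →₀ ℕ) - Finsupp.single 0 1
        = Finsupp.single (0 : Fin 3) 1 := by
      ext i; fin_cases i <;> simp
    have s4 : (Finsupp.single (0 : Fin 3) 2 + Finsupp.single 2 1) - Finsupp.single 0 1
        = Finsupp.single (0 : Fin 3) 1 + Finsupp.single 2 1 := by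
      ext i; fin_cases i <;> simp
    have s5 : (Finsupp.single (0 : Fin 3) 2 + Finsupp.single 2 1) - Finsupp.single 2 1
        = Finsupp.single (0 : Fin 3) 2 := by
      ext i; fin_cases i <;> simp
    have s6 : (Finsupp.single (0 : Fin 3) 1 + Finsupp.single 2 1) - Finsupp.single 2 1
        = Finsupp.single (0 : Fin 3) 1 := by
      ext i; fin_cases i <;> simp
    have E1 := congrArg (coeff (Finsupp.single (0 : Fin 3) 2 + Finsupp.single 1 1)) heq'
    have E2 := congrArg (coeff (Finsupp.single (0 : Fin 3) 2 + Finsupp.single 2 1)) heq'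
    simp only [coeff_add, coeff_sub, coeff_mul_X', s1, s2, s3, s4, s5, s6] at E1 E2
    simp [coeff_X_pow, Finsupp.single_apply, Finsupp.ext_iff, Fin.forall_fin_succ,
      Finsupp.add_apply] at E1 E2
    rw [arel] at E1
    exact absurd (E1.trans E2.symm) (by decide)
end

section
/- Let S = F₃[x, y, z] with A₃ acting by cyclically permuting variables. The inclusion S^{A₃} ↪ S does not split as a map of S^{A₃}-modules, i.e., there is no S^{A₃}-linear map π : S → S^{A₃} restricting to the identity on S^{A₃}. -/
open MvPolynomial

private abbrev R3 := MvPolynomial (Fin 3) (ZMod 3)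

private lemma aux_coeff_X_mul_of (s : Fin 3) (m m' : Fin 3 →₀ ℕ) (hs : m s ≠ 0)
    (hm : m - Finsupp.single s 1 = m') (w : R3) :
    coeff m (X s * w) = coeff m' w := by
  rw [coeff_X_mul', if_pos (Finsupp.mem_support_iff.2 hs), hm]

private lemma aux_coeff_X_mul_zero (s : Fin 3) (m : Fin 3 →₀ ℕ) (hs : m s = 0)
    (w : R3) : coeff m (X s * w) = 0 := by
  rw [coeff_X_mul', if_neg (by simp [Finsupp.mem_support_iff, hs])]

open MvPolynomial in
theorem stmt_13 :
    ¬ ∃ π : MvPolynomial (Fin 3) (ZMod 3) → MvPolynomial (Fin 3) (ZMod 3),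
      (∀ f g, π (f + g) = π f + π g) ∧
      (∀ f, rename (finRotate 3) (π f) = π f) ∧
      (∀ r f, rename (finRotate 3) r = r → π (r * f) = r * π f) ∧
      (∀ f, rename (finRotate 3) f = f → π f = f) := by
  rintro ⟨π, hadd, hinv, hsmul, hid⟩
  -- basic polynomials
  set e1 : R3 := X 0 + X 1 + X 2 with he1def
  set e2 : R3 := X 0 * X 1 + X 1 * X 2 + X 2 * X 0 with he2def
  set u : R3 := X 0 * (X 0 * X 1) + X 1 * (X 1 * X 2) + X 2 * (X 2 * X 0) with hudef
  set f1 : R3 := 2 * (X 0 * X 1) + X 0 * X 2 with hf1def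
  set f2 : R3 := 2 * X 0 + X 1 with hf2def
  have h0 : finRotate 3 (0 : Fin 3) = 1 := by decide
  have h1 : finRotate 3 (1 : Fin 3) = 2 := by decide
  have h2 : finRotate 3 (2 : Fin 3) = 0 := by decide
  have he1 : rename (finRotate 3) e1 = e1 := by
    simp only [he1def, map_add, rename_X, h0, h1, h2]; ring
  have he2 : rename (finRotate 3) e2 = e2 := by
    simp only [he2def, map_add, map_mul, rename_X, h0, h1, h2]; ring
  have hu : rename (finRotate 3) u = u := by
    simp only [hudef, map_add, map_mul, rename_X, h0, h1, h2]; ring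
  have h3 : (3 : R3) = 0 := by
    rw [← map_ofNat (C : ZMod 3 →+* R3) 3, show (OfNat.ofNat 3 : ZMod 3) = 0 from rfl, map_zero]
  have hu_eq : u = e1 * f1 + e2 * f2 := by
    rw [hudef, he1def, he2def, hf1def, hf2def]
    linear_combination (-(X 0 * (X 0 * X 1) + X 0 * (X 0 * X 2) + X 0 * (X 1 * X 1)
      + 2 * (X 0 * (X 1 * X 2))) : R3) * h3
  have key : u = X 0 * π f1 + (X 1 * π f1 + (X 2 * π f1 +
      (X 0 * (X 1 * π f2) + (X 1 * (X 2 * π f2) + X 2 * (X 0 * π f2))))) :=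
    calc u = π u := (hid u hu).symm
    _ = π (e1 * f1 + e2 * f2) := by rw [← hu_eq]
    _ = e1 * π f1 + e2 * π f2 := by rw [hadd, hsmul e1 f1 he1, hsmul e2 f2 he2]
    _ = _ := by ring
  -- monomials
  set s00 : Fin 3 →₀ ℕ := Finsupp.single 0 1 with hs00
  set s01 : Fin 3 →₀ ℕ := Finsupp.single 1 1 with hs01
  set sx2 : Fin 3 →₀ ℕ := Finsupp.single 0 2 with hsx2
  set sy2 : Fin 3 →₀ ℕ := Finsupp.single 1 2 with hsy2
  set mxy : Fin 3 →₀ ℕ := Finsupp.single 0 1 + Finsupp.single 1 1 with hmxy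
  set d1 : Fin 3 →₀ ℕ := Finsupp.single 0 2 + Finsupp.single 1 1 with hd1
  set d2 : Fin 3 →₀ ℕ := Finsupp.single 0 1 + Finsupp.single 1 2 with hd2
  -- finsupp arithmetic facts
  have fact1 : d1 - Finsupp.single 0 1 = mxy := by
    ext i; fin_cases i <;> simp [hd1, hmxy, Finsupp.tsub_apply, Finsupp.single_apply]
  have fact2 : d1 - Finsupp.single 1 1 = sx2 := by
    ext i; fin_cases i <;> simp [hd1, hsx2, Finsupp.tsub_apply, Finsupp.single_apply]
  have fact3 : d2 - Finsupp.single 0 1 = sy2 := by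
    ext i; fin_cases i <;> simp [hd2, hsy2, Finsupp.tsub_apply, Finsupp.single_apply]
  have fact4 : d2 - Finsupp.single 1 1 = mxy := by
    ext i; fin_cases i <;> simp [hd2, hmxy, Finsupp.tsub_apply, Finsupp.single_apply]
  have fact5 : mxy - Finsupp.single 0 1 = s01 := by
    ext i; fin_cases i <;> simp [hmxy, hs01, Finsupp.tsub_apply, Finsupp.single_apply]
  have fact6 : sy2 - Finsupp.single 1 1 = s01 := by
    ext i; fin_cases i <;> simp [hsy2, hs01, Finsupp.tsub_apply, Finsupp.single_apply]
  have ne_d1_0 : d1 0 ≠ 0 := by simp [hd1, Finsupp.single_apply]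
  have ne_d1_1 : d1 1 ≠ 0 := by simp [hd1, Finsupp.single_apply]
  have eq_d1_2 : d1 2 = 0 := by simp [hd1, Finsupp.single_apply]
  have ne_d2_0 : d2 0 ≠ 0 := by simp [hd2, Finsupp.single_apply]
  have ne_d2_1 : d2 1 ≠ 0 := by simp [hd2, Finsupp.single_apply]
  have eq_d2_2 : d2 2 = 0 := by simp [hd2, Finsupp.single_apply]
  have ne_mxy_0 : mxy 0 ≠ 0 := by simp [hmxy, Finsupp.single_apply]
  have eq_mxy_2 : mxy 2 = 0 := by simp [hmxy, Finsupp.single_apply]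
  have eq_sx2_1 : sx2 1 = 0 := by simp [hsx2, Finsupp.single_apply]
  have eq_sx2_2 : sx2 2 = 0 := by simp [hsx2, Finsupp.single_apply]
  have ne_sy2_1 : sy2 1 ≠ 0 := by simp [hsy2, Finsupp.single_apply]
  have eq_sy2_0 : sy2 0 = 0 := by simp [hsy2, Finsupp.single_apply]
  -- coefficients of u
  have cu1 : coeff d1 u = 1 := by
    rw [hudef]
    rw [coeff_add, coeff_add]
    rw [aux_coeff_X_mul_of 0 d1 mxy ne_d1_0 fact1,
        aux_coeff_X_mul_of 0 mxy s01 ne_mxy_0 fact5,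
        aux_coeff_X_mul_of 1 d1 sx2 ne_d1_1 fact2,
        aux_coeff_X_mul_zero 1 sx2 eq_sx2_1,
        aux_coeff_X_mul_zero 2 d1 eq_d1_2]
    simp [hs01]
  have cu2 : coeff d2 u = 0 := by
    rw [hudef]
    rw [coeff_add, coeff_add]
    rw [aux_coeff_X_mul_of 0 d2 sy2 ne_d2_0 fact3,
        aux_coeff_X_mul_zero 0 sy2 eq_sy2_0,
        aux_coeff_X_mul_of 1 d2 mxy ne_d2_1 fact4,
        show (X 1 * X 2 : R3) = X 2 * X 1 from mul_comm _ _,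
        aux_coeff_X_mul_zero 2 mxy eq_mxy_2,
        aux_coeff_X_mul_zero 2 d2 eq_d2_2]
    simp
  -- invariance of coefficients
  have hv1 : rename (finRotate 3) (π f1) = π f1 := hinv f1
  have hv2 : rename (finRotate 3) (π f2) = π f2 := hinv f2
  have inv1 : coeff sy2 (π f1) = coeff sx2 (π f1) := by
    have h := coeff_rename_mapDomain (finRotate 3) (finRotate 3).injective (π f1)
      (Finsupp.single 0 2)
    rw [hv1, Finsupp.mapDomain_single, h0] at h
    rw [hsy2, hsx2]; exact h
  have inv2 : coeff s01 (π f2) = coeff s00 (π f2) := by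
    have h := coeff_rename_mapDomain (finRotate 3) (finRotate 3).injective (π f2)
      (Finsupp.single 0 1)
    rw [hv2, Finsupp.mapDomain_single, h0] at h
    rw [hs01, hs00]; exact h
  -- extract coefficients of the key identity
  have c1 := congrArg (coeff d1) key
  have c2 := congrArg (coeff d2) key
  rw [cu1, coeff_add, coeff_add, coeff_add, coeff_add, coeff_add,
      aux_coeff_X_mul_of 0 d1 mxy ne_d1_0 fact1,
      aux_coeff_X_mul_of 1 d1 sx2 ne_d1_1 fact2,
      aux_coeff_X_mul_zero 2 d1 eq_d1_2,
      aux_coeff_X_mul_of 0 d1 mxy ne_d1_0 fact1,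
      aux_coeff_X_mul_of 1 mxy s00 (by simp [hmxy, Finsupp.single_apply]) (by
        ext i; fin_cases i <;> simp [hmxy, hs00, Finsupp.tsub_apply, Finsupp.single_apply]),
      aux_coeff_X_mul_of 1 d1 sx2 ne_d1_1 fact2,
      aux_coeff_X_mul_zero 2 sx2 eq_sx2_2,
      aux_coeff_X_mul_zero 2 d1 eq_d1_2] at c1
  rw [cu2, coeff_add, coeff_add, coeff_add, coeff_add, coeff_add,
      aux_coeff_X_mul_of 0 d2 sy2 ne_d2_0 fact3,
      aux_coeff_X_mul_of 1 d2 mxy ne_d2_1 fact4,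
      aux_coeff_X_mul_zero 2 d2 eq_d2_2,
      aux_coeff_X_mul_of 0 d2 sy2 ne_d2_0 fact3,
      aux_coeff_X_mul_of 1 sy2 s01 ne_sy2_1 fact6,
      aux_coeff_X_mul_of 1 d2 mxy ne_d2_1 fact4,
      aux_coeff_X_mul_zero 2 mxy eq_mxy_2,
      aux_coeff_X_mul_zero 2 d2 eq_d2_2] at c2
  rw [inv1, inv2] at c2
  -- c1 : 1 = A + (B + (0 + (C + (0 + 0)))), c2 : 0 = B + (A + (0 + (C + (0 + 0))))
  have : (1 : ZMod 3) = 0 := by linear_combination c1 - c2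
  exact one_ne_zero this
end
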